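/- arXiv:2008.01017 — 5 statements merged into one kernel-verified Lean document; each statement's English description precedes it below -/
import Mathlib

section
/- Let s₁ > 0, A₁ > 0, and let ρ be a Borel measure on (0,∞) with ∫ dρ(s)/(1+s) < ∞. Define v(x) = ∫₀^∞ dρ(s)/(x+s) − A₁/(x+s₁) for x > 0. Then either v is identically zero on (0,∞), or the set {x ∈ (0,∞) : v(x) = 0} has at most two elements. -/
open MeasureTheory

/-!
If `v` vanishes at three distinct points `a, b, c > 0`, the partial fraction expansion
`(s - s₁)² / ((a + s)(b + s)(c + s)) = Σ wₓ / (x + s)` over `x ∈ {a, b, c}` lets us integrate the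
left side against `ρ` using only the values `∫ dρ(s)/(x + s) = A₁/(x + s₁)`: the result is `A₁`
times the left side at `s = s₁`, i.e. zero. A nonnegative function with zero integral vanishes
a.e., so `ρ` is concentrated at `s₁`, and then `v` is a multiple of `1/(x + s₁)` vanishing at `a`.
-/

lemma Set.exists_three_ne_of_not_subset_pair {α : Type*} [Nonempty α] {S : Set α}
    (h : ¬ ∃ a b, S ⊆ {a, b}) : ∃ a ∈ S, ∃ b ∈ S, ∃ c ∈ S, a ≠ b ∧ a ≠ c ∧ b ≠ c := by
  push Not at h
  obtain ⟨a, ha, -⟩ := Set.not_subset.1 (h (Classical.arbitrary α) (Classical.arbitrary α))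
  obtain ⟨b, hb, hba⟩ := Set.not_subset.1 (h a a)
  obtain ⟨c, hc, hcab⟩ := Set.not_subset.1 (h a b)
  simp only [Set.mem_insert_iff, Set.mem_singleton_iff, not_or] at hba hcab
  exact ⟨a, ha, b, hb, c, hc, Ne.symm hba.1, Ne.symm hcab.1, Ne.symm hcab.2⟩

lemma one_div_add_le {x s : ℝ} (hx : 0 < x) (hs : 0 ≤ s) :
    1 / (x + s) ≤ (1 + x⁻¹) * (1 / (1 + s)) := by
  rw [mul_one_div, div_le_div_iff₀ (by positivity) (by positivity), one_mul,
    add_mul, one_mul, inv_mul_eq_div, add_div, div_self hx.ne']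
  linarith [div_nonneg hs hx.le]

lemma sq_sub_div_eq_partial_fractions {a b c t s : ℝ} (hab : a ≠ b) (hac : a ≠ c) (hbc : b ≠ c)
    (ha : a + s ≠ 0) (hb : b + s ≠ 0) (hc : c + s ≠ 0) :
    (s - t) ^ 2 / ((a + s) * (b + s) * (c + s)) =
      (a + t) ^ 2 / ((b - a) * (c - a)) * (1 / (a + s)) +
        (b + t) ^ 2 / ((a - b) * (c - b)) * (1 / (b + s)) +
          (c + t) ^ 2 / ((a - c) * (b - c)) * (1 / (c + s)) := by
  have := sub_ne_zero.2 hab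
  have := sub_ne_zero.2 hac
  have := sub_ne_zero.2 hbc
  have := sub_ne_zero.2 hab.symm
  have := sub_ne_zero.2 hac.symm
  have := sub_ne_zero.2 hbc.symm
  field_simp
  ring

section StieltjesTransform

variable {ρ : Measure ℝ}

lemma integrable_one_div_add (hρ : ∀ᵐ s ∂ρ, 0 ≤ s)
    (hint : Integrable (fun s => 1 / (1 + s)) ρ) {x : ℝ} (hx : 0 < x) :
    Integrable (fun s => 1 / (x + s)) ρ := by
  refine (hint.const_mul (1 + x⁻¹)).mono'
    (measurable_const.div (measurable_id.const_add x)).aestronglyMeasurable ?_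
  filter_upwards [hρ] with s hs
  rw [Real.norm_of_nonneg (by positivity)]
  exact one_div_add_le hx hs

lemma ae_eq_of_integral_one_div_add_eq (hρ : ∀ᵐ s ∂ρ, 0 ≤ s)
    (hint : Integrable (fun s => 1 / (1 + s)) ρ) {A t a b c : ℝ} (ht : 0 ≤ t)
    (ha : 0 < a) (hb : 0 < b) (hc : 0 < c) (hab : a ≠ b) (hac : a ≠ c) (hbc : b ≠ c)
    (hIa : ∫ s, 1 / (a + s) ∂ρ = A / (a + t)) (hIb : ∫ s, 1 / (b + s) ∂ρ = A / (b + t))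
    (hIc : ∫ s, 1 / (c + s) ∂ρ = A / (c + t)) :
    ∀ᵐ s ∂ρ, s = t := by
  set F : ℝ → ℝ := fun s => (s - t) ^ 2 / ((a + s) * (b + s) * (c + s))
  have hF_eq : ∀ s, 0 ≤ s → F s = _ := fun s hs =>
    sq_sub_div_eq_partial_fractions (t := t) hab hac hbc (by positivity) (by positivity)
      (by positivity)
  have hia := (integrable_one_div_add hρ hint ha).const_mul ((a + t) ^ 2 / ((b - a) * (c - a)))
  have hib := (integrable_one_div_add hρ hint hb).const_mul ((b + t) ^ 2 / ((a - b) * (c - b)))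
  have hic := (integrable_one_div_add hρ hint hc).const_mul ((c + t) ^ 2 / ((a - c) * (b - c)))
  have hF_ae : F =ᵐ[ρ] _ := hρ.mono hF_eq
  have hF_integral : ∫ s, F s ∂ρ = 0 := by
    rw [integral_congr_ae hF_ae, integral_add (f := fun s => _ + _) (hia.add hib) hic,
      integral_add hia hib, integral_const_mul, integral_const_mul, integral_const_mul,
      hIa, hIb, hIc]
    have hFt : F t = 0 := by simp [F]
    rw [hF_eq t ht] at hFt
    linear_combination A * hFt
  have hF_nonneg : 0 ≤ᵐ[ρ] F := hρ.mono fun s hs => by positivity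
  have hF_zero := (integral_eq_zero_iff_of_nonneg_ae hF_nonneg
    (((hia.add hib).add hic).congr hF_ae.symm)).1 hF_integral
  filter_upwards [hF_zero, hρ] with s hFs hs
  have hden : (a + s) * (b + s) * (c + s) ≠ 0 := by positivity
  simpa [F, hden, sub_eq_zero] using hFs

lemma integral_one_div_add_of_ae_eq {t : ℝ} (h : ∀ᵐ s ∂ρ, s = t) (x : ℝ) :
    ∫ s, 1 / (x + s) ∂ρ = ρ.real Set.univ / (x + t) := by
  rw [integral_congr_ae (g := fun _ => 1 / (x + t)) (h.mono fun s hs => by rw [hs]),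
    integral_const, smul_eq_mul, mul_one_div]

end StieltjesTransform

theorem zeros_of_v_at_most_two_general
    (s₁ A₁ : ℝ) (hs₁ : 0 < s₁)
    (ρ : Measure ℝ) (hρsupp : ρ (Set.Iic 0) = 0)
    (hρint : Integrable (fun s => 1 / (1 + s)) ρ)
    (v : ℝ → ℝ)
    (hv : ∀ x, 0 < x → v x = (∫ s, 1 / (x + s) ∂ρ) - A₁ / (x + s₁)) :
    (∀ x, 0 < x → v x = 0) ∨
      ∃ a b : ℝ, {x : ℝ | 0 < x ∧ v x = 0} ⊆ {a, b} := by
  have hρ : ∀ᵐ s ∂ρ, 0 ≤ s :=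
    ae_iff.2 (measure_mono_null (fun s hs => (not_le.1 hs).le) hρsupp)
  have hI : ∀ x, 0 < x → v x = 0 → ∫ s, 1 / (x + s) ∂ρ = A₁ / (x + s₁) := fun x hx hvx => by
    linarith [hv x hx]
  refine or_iff_not_imp_right.2 fun h => ?_
  obtain ⟨a, ⟨ha, hva⟩, b, ⟨hb, hvb⟩, c, ⟨hc, hvc⟩, hab, hac, hbc⟩ :=
    Set.exists_three_ne_of_not_subset_pair h
  have hρt := ae_eq_of_integral_one_div_add_eq hρ hρint hs₁.le ha hb hc hab hac hbc
    (hI a ha hva) (hI b hb hvb) (hI c hc hvc)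
  have hmass : ρ.real Set.univ = A₁ := by
    have := hI a ha hva
    rwa [integral_one_div_add_of_ae_eq hρt, div_left_inj' (by positivity)] at this
  intro x hx
  rw [hv x hx, integral_one_div_add_of_ae_eq hρt, hmass, sub_self]

theorem zeros_of_v_at_most_two
    (s₁ A₁ : ℝ) (hs₁ : 0 < s₁) (hA₁ : 0 < A₁)
    (ρ : Measure ℝ) (hρsupp : ρ (Set.Iic 0) = 0)
    (hρint : Integrable (fun s => 1 / (1 + s)) ρ)
    (v : ℝ → ℝ)
    (hv : ∀ x, 0 < x → v x = (∫ s, 1 / (x + s) ∂ρ) - A₁ / (x + s₁)) :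
    (∀ x, 0 < x → v x = 0) ∨
      ∃ a b : ℝ, {x : ℝ | 0 < x ∧ v x = 0} ⊆ {a, b} :=
  zeros_of_v_at_most_two_general s₁ A₁ hs₁ ρ hρsupp hρint v hv
end

section
/- Let s₁ > 0, A₁ > 0, and let ρ be a Borel measure on (0,∞) with ∫ dρ(s)/(1+s) < ∞. Define v(x) = ∫₀^∞ dρ(s)/(x+s) − A₁/(x+s₁) for x > 0. Assume that the integral ∫₀^∞ v(x)·x^{−1/2} dx exists and is strictly positive. Then there exist extended real numbers 0 ≤ x₁ ≤ x₂ ≤ +∞ such that v(x) ≥ 0 for all x ∈ (0,x₁) ∪ (x₂,∞) and v(x) ≤ 0 for all x ∈ (x₁,x₂). -/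
/-!
Multiplying by `x + s₁ > 0`, `v x < 0` iff `G x < A₁`, where `G x = ∫ (x + s₁)/(x + s) dρ(s)`.
For `a < b < c` and `s ≥ 0`, the slope of `x ↦ (x + s₁)/(x + s)` on `[b, c]` minus
`(a + s₁)/(c + s₁)` times its slope on `[a, b]` equals
`(c - a)(s - s₁)² / ((a + s)(b + s)(c + s)(c + s₁)) ≥ 0`. Integrating in `s`, once `G` has
increased it keeps increasing, so `{x > 0 | G x < A₁}` is an interval, whose endpoints are
`x₁` and `x₂`.
-/

open MeasureTheory Set
open scoped ENNReal

theorem slope_integral {α : Type*} [MeasurableSpace α] {μ : Measure α} {k : ℝ → α → ℝ}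
    {a b : ℝ} (ha : Integrable (k a) μ) (hb : Integrable (k b) μ) :
    slope (fun x => ∫ s, k x s ∂μ) a b = ∫ s, slope (fun x => k x s) a b ∂μ := by
  simp only [slope_def_field, integral_div, integral_sub hb ha]

theorem MeasureTheory.Integrable.slope {α : Type*} [MeasurableSpace α] {μ : Measure α}
    {k : ℝ → α → ℝ} {a b : ℝ} (ha : Integrable (k a) μ) (hb : Integrable (k b) μ) :
    Integrable (fun s => slope (fun x => k x s) a b) μ := by
  simpa only [slope_def_field, Pi.sub_apply] using (hb.sub ha).div_const (b - a)

theorem Set.OrdConnected.setOf_lt_of_lt_imp_lt {α β : Type*} [LinearOrder α] [LinearOrder β]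
    {f : α → β} {s : Set α} (hs : s.OrdConnected)
    (hf : ∀ a ∈ s, ∀ c ∈ s, ∀ b, a < b → b < c → f a < f b → f b < f c) (r : β) :
    {x | x ∈ s ∧ f x < r}.OrdConnected := by
  refine ⟨fun a ⟨has, hfa⟩ c ⟨hcs, hfc⟩ b ⟨hab, hbc⟩ => ⟨hs.out has hcs ⟨hab, hbc⟩, ?_⟩⟩
  rcases hab.eq_or_lt with rfl | hab; · exact hfa
  rcases hbc.eq_or_lt with rfl | hbc; · exact hfc
  by_contra! hrb
  exact (hrb.trans_lt (hf a has c hcs b hab hbc (hfa.trans_le hrb))).not_gt hfc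

theorem mul_slope_div_add_le_slope {s₁ s a b c : ℝ} (hs₁ : 0 ≤ s₁) (hs : 0 ≤ s) (ha : 0 < a)
    (hab : a < b) (hbc : b < c) :
    (a + s₁) / (c + s₁) * slope (fun x => (x + s₁) / (x + s)) a b
      ≤ slope (fun x => (x + s₁) / (x + s)) b c := by
  have hb : 0 < b := ha.trans hab
  have hc : 0 < c := hb.trans hbc
  rw [← sub_nonneg]
  have key : slope (fun x => (x + s₁) / (x + s)) b c
      - (a + s₁) / (c + s₁) * slope (fun x => (x + s₁) / (x + s)) a b
      = (c - a) * (s - s₁) ^ 2 / ((a + s) * (b + s) * (c + s) * (c + s₁)) := by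
    simp only [slope_def_field]
    have : b - a ≠ 0 := by linarith
    have : c - b ≠ 0 := by linarith
    field_simp
    ring
  rw [key]
  exact div_nonneg (mul_nonneg (by linarith) (sq_nonneg _)) (by positivity)

section Stieltjes

variable {ρ : Measure ℝ} (hρ : ∀ᵐ s ∂ρ, 0 ≤ s)
include hρ

theorem integrable_div_add (hρint : Integrable (fun s => 1 / (1 + s)) ρ) (c : ℝ) {x : ℝ}
    (hx : 0 < x) : Integrable (fun s => c / (x + s)) ρ := by
  refine (hρint.const_mul (|c| * max 1 x⁻¹)).mono'
    (by fun_prop : Measurable _).aestronglyMeasurable ?_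
  filter_upwards [hρ] with s hs
  have hxs : 0 < x + s := by linarith
  have hle : 1 / (x + s) ≤ max 1 x⁻¹ * (1 / (1 + s)) := by
    rw [mul_one_div, div_le_div_iff₀ hxs (by linarith)]
    have : x⁻¹ * x = 1 := inv_mul_cancel₀ hx.ne'
    nlinarith [le_max_left 1 x⁻¹, le_max_right 1 x⁻¹]
  calc ‖c / (x + s)‖ = |c| * (1 / (x + s)) := by
        rw [Real.norm_eq_abs, abs_div, abs_of_pos hxs, mul_one_div]
    _ ≤ |c| * (max 1 x⁻¹ * (1 / (1 + s))) := by gcongr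
    _ = |c| * max 1 x⁻¹ * (1 / (1 + s)) := by ring

theorem integral_add_div_add_lt_of_lt (hρint : Integrable (fun s => 1 / (1 + s)) ρ) {s₁ : ℝ}
    (hs₁ : 0 ≤ s₁) {a b c : ℝ} (ha : 0 < a) (hab : a < b) (hbc : b < c)
    (h : ∫ s, (a + s₁) / (a + s) ∂ρ < ∫ s, (b + s₁) / (b + s) ∂ρ) :
    ∫ s, (b + s₁) / (b + s) ∂ρ < ∫ s, (c + s₁) / (c + s) ∂ρ := by
  have hb : 0 < b := ha.trans hab
  have hc : 0 < c := hb.trans hbc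
  set k : ℝ → ℝ → ℝ := fun x s => (x + s₁) / (x + s)
  have hk (x : ℝ) (hx : 0 < x) : Integrable (k x) ρ := integrable_div_add hρ hρint _ hx
  have hslope : (a + s₁) / (c + s₁) * slope (fun x => ∫ s, k x s ∂ρ) a b
      ≤ slope (fun x => ∫ s, k x s ∂ρ) b c := by
    rw [slope_integral (hk a ha) (hk b hb), slope_integral (hk b hb) (hk c hc),
      ← integral_const_mul]
    exact integral_mono_ae (((hk a ha).slope (hk b hb)).const_mul _) ((hk b hb).slope (hk c hc))
      (hρ.mono fun s hs => mul_slope_div_add_le_slope hs₁ hs ha hab hbc)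
  rw [← slope_pos_iff_of_le (f := fun x => ∫ s, k x s ∂ρ) hab.le] at h
  rw [← slope_pos_iff_of_le (f := fun x => ∫ s, k x s ∂ρ) hbc.le]
  exact (mul_pos (by positivity) h).trans_le hslope

end Stieltjes

theorem exists_sign_pattern_of_ordConnected {v : ℝ → ℝ}
    (h : {x | 0 < x ∧ v x < 0}.OrdConnected) :
    ∃ x₁ x₂ : ℝ≥0∞, x₁ ≤ x₂ ∧
      (∀ x : ℝ, 0 < x → ENNReal.ofReal x < x₁ → 0 ≤ v x) ∧
      (∀ x : ℝ, x₂ < ENNReal.ofReal x → 0 ≤ v x) ∧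
      (∀ x : ℝ, x₁ < ENNReal.ofReal x → ENNReal.ofReal x < x₂ → v x ≤ 0) := by
  set N := {x | 0 < x ∧ v x < 0}
  set x₁ := ⨅ x ∈ N, ENNReal.ofReal x
  set x₂ := ⨆ x ∈ N, ENNReal.ofReal x
  -- `max` covers empty `N`, where `x₁ = ⊤` and `x₂ = 0`
  refine ⟨x₁, max x₁ x₂, le_max_left _ _, ?_, ?_, ?_⟩
  · intro x hx hlt
    by_contra! hvx
    exact hlt.not_ge (biInf_le _ ⟨hx, hvx⟩)
  · intro x hlt
    have hx : 0 < x := ENNReal.ofReal_pos.1 (zero_le.trans_lt hlt)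
    by_contra! hvx
    exact hlt.not_ge ((le_biSup (s := N) _ ⟨hx, hvx⟩).trans (le_max_right _ _))
  · intro x h₁ h₂
    obtain ⟨a, haN, hax⟩ := lt_biInf_iff.1 h₁
    obtain ⟨c, hcN, hxc⟩ := lt_biSup_iff.1 ((lt_max_iff.1 h₂).resolve_left h₁.not_gt)
    rw [ENNReal.ofReal_lt_ofReal_iff'] at hax hxc
    exact (h.out haN hcN ⟨hax.1.le, hxc.1.le⟩).2.le

theorem sign_pattern_of_v_general
    (s₁ A₁ : ℝ) (hs₁ : 0 < s₁)
    (ρ : Measure ℝ) (hρsupp : ρ (Set.Iic 0) = 0)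
    (hρint : Integrable (fun s => 1 / (1 + s)) ρ)
    (v : ℝ → ℝ)
    (hv : ∀ x, 0 < x → v x = (∫ s, 1 / (x + s) ∂ρ) - A₁ / (x + s₁)) :
    ∃ x₁ x₂ : ℝ≥0∞, x₁ ≤ x₂ ∧
      (∀ x : ℝ, 0 < x → ENNReal.ofReal x < x₁ → 0 ≤ v x) ∧
      (∀ x : ℝ, x₂ < ENNReal.ofReal x → 0 ≤ v x) ∧
      (∀ x : ℝ, x₁ < ENNReal.ofReal x → ENNReal.ofReal x < x₂ → v x ≤ 0) := by
  have hρ : ∀ᵐ s ∂ρ, 0 ≤ s :=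
    ae_iff.2 (measure_mono_null (fun s hs => (not_le.1 hs).le) hρsupp)
  set G : ℝ → ℝ := fun x => ∫ s, (x + s₁) / (x + s) ∂ρ
  have hvG (x : ℝ) (hx : 0 < x) : v x < 0 ↔ G x < A₁ := by
    have hG : G x = (x + s₁) * ∫ s, 1 / (x + s) ∂ρ := by
      simp only [G, ← integral_const_mul, mul_one_div]
    rw [hv x hx, hG, sub_neg, lt_div_iff₀ (by linarith), mul_comm]
  have hN : {x | 0 < x ∧ v x < 0} = {x | x ∈ Ioi 0 ∧ G x < A₁} := by
    ext x
    exact and_congr_right (hvG x)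
  apply exists_sign_pattern_of_ordConnected
  rw [hN]
  exact ordConnected_Ioi.setOf_lt_of_lt_imp_lt
    (fun a ha _ _ b hab hbc => integral_add_div_add_lt_of_lt hρ hρint hs₁.le ha hab hbc) A₁

theorem sign_pattern_of_v
    (s₁ A₁ : ℝ) (hs₁ : 0 < s₁) (hA₁ : 0 < A₁)
    (ρ : Measure ℝ) (hρsupp : ρ (Set.Iic 0) = 0)
    (hρint : Integrable (fun s => 1 / (1 + s)) ρ)
    (v : ℝ → ℝ)
    (hv : ∀ x, 0 < x → v x = (∫ s, 1 / (x + s) ∂ρ) - A₁ / (x + s₁))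
    (hint : IntegrableOn (fun x => v x / Real.sqrt x) (Set.Ioi 0))
    (hpos : 0 < ∫ x in Set.Ioi 0, v x / Real.sqrt x) :
    ∃ x₁ x₂ : ℝ≥0∞, x₁ ≤ x₂ ∧
      (∀ x : ℝ, 0 < x → ENNReal.ofReal x < x₁ → 0 ≤ v x) ∧
      (∀ x : ℝ, x₂ < ENNReal.ofReal x → 0 ≤ v x) ∧
      (∀ x : ℝ, x₁ < ENNReal.ofReal x → ENNReal.ofReal x < x₂ → v x ≤ 0) :=
  sign_pattern_of_v_general s₁ A₁ hs₁ ρ hρsupp hρint v hv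
end

section
/- Let s₁ > 0, A₁ > 0, and let ρ be a Borel measure on (0,∞) with ∫ dρ(s)/(1+s) < ∞. Define v(x) = ∫₀^∞ dρ(s)/(x+s) − A₁/(x+s₁) for x > 0, and assume v is not identically zero on (0,∞). Then the derivative v′ has at most two zeros in (0,∞), and the derivative of x ↦ x·v(x) has at most two zeros in (0,∞). -/
/-!
Differentiating under the integral sign gives `v' x = A₁ / (x + s₁)² - ∫ dρ(s) / (x + s)²` and
`(x v)' x = ∫ s dρ(s) / (x + s)² - A₁ s₁ / (x + s₁)²`. So both zero sets are level sets
`∫ w s (x + s₁)² / (x + s)² dρ(s) = A₁ w s₁`, with weight `w = 1` resp. `w s = s`.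
In the variable `u = (x + s₁)⁻¹ ∈ (0, s₁⁻¹)` the integrand is `w s (1 + (s - s₁) u)⁻²`, which is
convex in `u`, and strictly convex unless `s = s₁`. Unless `ρ` is concentrated at `s₁`, the
left-hand side is therefore a strictly convex function of `u`, and it takes each value at most
twice. If `ρ = c δ_{s₁}` then `v x = (c - A₁) / (x + s₁)` with `c ≠ A₁`, and neither derivative
vanishes.
-/

open MeasureTheory Set Filter

theorem Set.exists_subset_pair_of_forall_not_lt_lt {α : Type*} [LinearOrder α] [Nonempty α]
    {Z : Set α} (h : ∀ x ∈ Z, ∀ y ∈ Z, ∀ z ∈ Z, ¬(x < y ∧ y < z)) : ∃ a b, Z ⊆ {a, b} := by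
  by_contra! H
  inhabit α
  obtain ⟨x, hx, -⟩ := not_subset.1 (H default default)
  obtain ⟨y, hy, hyx⟩ := not_subset.1 (H x x)
  obtain ⟨z, hz, hzxy⟩ := not_subset.1 (H x y)
  simp only [mem_insert_iff, mem_singleton_iff, or_self, not_or] at hyx hzxy
  rcases Ne.lt_or_gt hyx with hyx | hyx <;> rcases Ne.lt_or_gt hzxy.1 with hzx | hzx <;>
    rcases Ne.lt_or_gt hzxy.2 with hzy | hzy <;> grind

theorem StrictConvexOn.exists_subset_pair_of_eq {s : Set ℝ} {f : ℝ → ℝ}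
    (hf : StrictConvexOn ℝ s f) (c : ℝ) : ∃ a b, {x ∈ s | f x = c} ⊆ {a, b} := by
  refine Set.exists_subset_pair_of_forall_not_lt_lt ?_
  rintro x ⟨hx, rfl⟩ y ⟨-, hy⟩ z ⟨hz, hfz⟩ ⟨hxy, hyz⟩
  have := hf.lt_on_openSegment hx hz (hxy.trans hyz).ne
    (by rw [openSegment_eq_Ioo (hxy.trans hyz)]; exact ⟨hxy, hyz⟩)
  simp [hy, hfz] at this

theorem integral_eq_smul_of_ae_eq {α E : Type*} [MeasurableSpace α] [NormedAddCommGroup E]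
    [NormedSpace ℝ E] [CompleteSpace E] {μ : Measure α} {a₀ : α} (h : ∀ᵐ a ∂μ, a = a₀)
    (f : α → E) : ∫ a, f a ∂μ = μ.real univ • f a₀ := by
  rw [integral_congr_ae (h.mono fun a ha => congrArg f ha), integral_const]

theorem integral_lt_integral_of_ae_le_of_frequently_lt {α : Type*} [MeasurableSpace α]
    {μ : Measure α} {f g : α → ℝ} (hf : Integrable f μ) (hg : Integrable g μ)
    (hle : ∀ᵐ a ∂μ, f a ≤ g a) (hlt : ∃ᵐ a ∂μ, f a < g a) : ∫ a, f a ∂μ < ∫ a, g a ∂μ := by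
  rw [← sub_pos, ← integral_sub hg hf, integral_pos_iff_support_of_nonneg_ae
    (hle.mono fun a ha => sub_nonneg.2 ha) (hg.sub hf), pos_iff_ne_zero, ← frequently_ae_mem_iff]
  exact hlt.mono fun a ha => Function.mem_support.2 (sub_pos.2 ha).ne'

theorem strictConvexOn_integral {α E : Type*} [MeasurableSpace α] {μ : Measure α}
    [AddCommGroup E] [Module ℝ E] {D : Set E} {φ : α → E → ℝ} (hD : Convex ℝ D)
    (hint : ∀ u ∈ D, Integrable (fun a => φ a u) μ) (hconv : ∀ᵐ a ∂μ, ConvexOn ℝ D (φ a))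
    (hstrict : ∃ᵐ a ∂μ, StrictConvexOn ℝ D (φ a)) :
    StrictConvexOn ℝ D fun u => ∫ a, φ a u ∂μ := by
  refine ⟨hD, fun x hx y hy hxy s t hs ht hst => ?_⟩
  have hcomb : Integrable (fun a => s * φ a x + t * φ a y) μ :=
    ((hint x hx).const_mul s).add ((hint y hy).const_mul t)
  calc ∫ a, φ a (s • x + t • y) ∂μ < ∫ a, s * φ a x + t * φ a y ∂μ :=
        integral_lt_integral_of_ae_le_of_frequently_lt (hint _ (hD hx hy hs.le ht.le hst)) hcomb
          (hconv.mono fun a ha => ha.2 hx hy hs.le ht.le hst)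
          (hstrict.mono fun a ha => ha.2 hx hy hxy hs ht hst)
    _ = s • ∫ a, φ a x ∂μ + t • ∫ a, φ a y ∂μ := by
        rw [integral_add ((hint x hx).const_mul s) ((hint y hy).const_mul t), integral_const_mul,
          integral_const_mul, smul_eq_mul, smul_eq_mul]

theorem strictConvexOn_mul_inv_sq_one_add_mul {D : Set ℝ} (hD : Convex ℝ D) {w c : ℝ}
    (hw : 0 < w) (hc : c ≠ 0) (hpos : ∀ u ∈ D, 0 < 1 + c * u) :
    StrictConvexOn ℝ D fun u => w * ((1 + c * u) ^ 2)⁻¹ := by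
  refine ⟨hD, fun x hx y hy hxy a b ha hb hab => ?_⟩
  have key := (strictConvexOn_zpow (m := -2) (by norm_num) (by norm_num)).2 (hpos x hx)
    (hpos y hy) (by simpa [hc] using hxy) ha hb hab
  have hcomb : a * (1 + c * x) + b * (1 + c * y) = 1 + c * (a * x + b * y) := by
    linear_combination hab
  simp only [smul_eq_mul, zpow_neg, hcomb] at key ⊢
  norm_cast at key
  calc w * ((1 + c * (a * x + b * y)) ^ 2)⁻¹
      < w * (a * ((1 + c * x) ^ 2)⁻¹ + b * ((1 + c * y) ^ 2)⁻¹) := mul_lt_mul_of_pos_left key hw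
    _ = _ := by ring

theorem inv_add_le_mul_inv_one_add {x s : ℝ} (hx : 0 < x) (hs : 0 ≤ s) :
    (x + s)⁻¹ ≤ (1 + x⁻¹) * (1 + s)⁻¹ := by
  rw [← div_eq_mul_inv, le_div_iff₀ (by positivity), inv_mul_le_iff₀ (by positivity)]
  field_simp
  nlinarith

theorem integrable_inv_add {μ : Measure ℝ} (hμ : ∀ᵐ s ∂μ, 0 ≤ s)
    (h1 : Integrable (fun s => (1 + s)⁻¹) μ) {x : ℝ} (hx : 0 < x) :
    Integrable (fun s => (x + s)⁻¹) μ :=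
  (h1.const_mul (1 + x⁻¹)).mono' (by fun_prop) <| hμ.mono fun s hs => by
    rw [norm_inv, Real.norm_of_nonneg (by positivity)]
    exact inv_add_le_mul_inv_one_add hx hs

theorem integrable_inv_add_sq {μ : Measure ℝ} (hμ : ∀ᵐ s ∂μ, 0 ≤ s)
    (h1 : Integrable (fun s => (1 + s)⁻¹) μ) {x : ℝ} (hx : 0 < x) :
    Integrable (fun s => ((x + s) ^ 2)⁻¹) μ :=
  ((integrable_inv_add hμ h1 hx).const_mul x⁻¹).mono' (by fun_prop) <| hμ.mono fun s hs => by
    rw [norm_inv, Real.norm_of_nonneg (by positivity), sq, mul_inv]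
    gcongr
    linarith

theorem integrable_mul_inv_add_sq {μ : Measure ℝ} (hμ : ∀ᵐ s ∂μ, 0 ≤ s)
    (h1 : Integrable (fun s => (1 + s)⁻¹) μ) {x : ℝ} (hx : 0 < x) :
    Integrable (fun s => s * ((x + s) ^ 2)⁻¹) μ :=
  (integrable_inv_add hμ h1 hx).mono' (by fun_prop) <| hμ.mono fun s hs => by
    rw [norm_mul, norm_inv, Real.norm_of_nonneg hs, Real.norm_of_nonneg (by positivity), sq,
      mul_inv, ← mul_assoc]
    refine mul_le_of_le_one_left (by positivity) ?_
    rw [← div_eq_mul_inv, div_le_one (by positivity)]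
    linarith

theorem hasDerivAt_integral_inv_add {μ : Measure ℝ} (hμ : ∀ᵐ s ∂μ, 0 ≤ s)
    (h1 : Integrable (fun s => (1 + s)⁻¹) μ) {x : ℝ} (hx : 0 < x) :
    HasDerivAt (fun y => ∫ s, (y + s)⁻¹ ∂μ) (-∫ s, ((x + s) ^ 2)⁻¹ ∂μ) x := by
  have key := hasDerivAt_integral_of_dominated_loc_of_deriv_le (F := fun y s => (y + s)⁻¹)
    (F' := fun y s => -((y + s) ^ 2)⁻¹) (Ioi_mem_nhds (half_lt_self hx))
    (Eventually.of_forall fun y => by fun_prop) (integrable_inv_add hμ h1 hx) (by fun_prop)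
    (hμ.mono fun s hs y (hy : x / 2 < y) => ?_) (integrable_inv_add_sq hμ h1 (half_pos hx))
    (hμ.mono fun s hs y (hy : x / 2 < y) => ?_)
  · simpa only [integral_neg] using key.2
  · rw [norm_neg, norm_inv, Real.norm_of_nonneg (by positivity)]
    gcongr
  · exact (hasDerivAt_inv (by linarith : y + s ≠ 0)).comp_add_const y s

theorem one_add_sub_mul_pos {s s₁ u : ℝ} (hs : 0 ≤ s) (hs₁ : 0 < s₁) (hu : u ∈ Ioo 0 s₁⁻¹) :
    0 < 1 + (s - s₁) * u := by
  have : s₁ * u < 1 := by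
    calc s₁ * u < s₁ * s₁⁻¹ := by gcongr; exact hu.2
      _ = 1 := mul_inv_cancel₀ hs₁.ne'
  nlinarith [hu.1]

theorem mul_inv_sq_one_add_sub_mul_inv (w : ℝ) {x s s₁ : ℝ} (hx : x + s₁ ≠ 0) :
    w * ((1 + (s - s₁) * (x + s₁)⁻¹) ^ 2)⁻¹ = (x + s₁) ^ 2 * (w * ((x + s) ^ 2)⁻¹) := by
  have e : 1 + (s - s₁) * (x + s₁)⁻¹ = (x + s) / (x + s₁) := by
    field_simp
    ring
  rw [e, div_pow, inv_div]
  ring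

section

variable {μ : Measure ℝ} {w : ℝ → ℝ} {s₁ : ℝ}

theorem strictConvexOn_integral_mul_inv_sq_one_add_sub_mul (hs₁ : 0 < s₁)
    (hμ : ∀ᵐ s ∂μ, 0 < s) (hw : ∀ s, 0 < s → 0 < w s)
    (hint : ∀ x, 0 < x → Integrable (fun s => w s * ((x + s) ^ 2)⁻¹) μ)
    (hμs₁ : ∃ᵐ s ∂μ, s ≠ s₁) :
    StrictConvexOn ℝ (Ioo 0 s₁⁻¹) fun u => ∫ s, w s * ((1 + (s - s₁) * u) ^ 2)⁻¹ ∂μ := by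
  have hstrict : ∀ s, 0 < s → s ≠ s₁ →
      StrictConvexOn ℝ (Ioo 0 s₁⁻¹) fun u => w s * ((1 + (s - s₁) * u) ^ 2)⁻¹ :=
    fun s hs hne => strictConvexOn_mul_inv_sq_one_add_mul (convex_Ioo _ _) (hw s hs)
      (sub_ne_zero.2 hne) fun u hu => one_add_sub_mul_pos hs.le hs₁ hu
  refine strictConvexOn_integral (convex_Ioo _ _) (fun u hu => ?_) ?_
    ((hμs₁.and_eventually hμ).mono fun s ⟨hne, hs⟩ => hstrict s hs hne)
  · have hx : 0 < u⁻¹ - s₁ := sub_pos.2 ((lt_inv_comm₀ hs₁ hu.1).2 hu.2)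
    refine ((hint _ hx).const_mul ((u⁻¹ - s₁ + s₁) ^ 2)).congr (Eventually.of_forall fun s => ?_)
    have hx₁ : u⁻¹ - s₁ + s₁ ≠ 0 := by simp [hu.1.ne']
    simpa using (mul_inv_sq_one_add_sub_mul_inv (w s) (s := s) hx₁).symm
  · filter_upwards [hμ] with s hs
    rcases eq_or_ne s s₁ with rfl | hne
    · simpa using convexOn_const (w s) (convex_Ioo 0 s⁻¹)
    · exact (hstrict s hs hne).convexOn

theorem exists_subset_pair_setOf_integral_mul_inv_sq_eq (A : ℝ) (hs₁ : 0 < s₁)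
    (hμ : ∀ᵐ s ∂μ, 0 < s) (hw : ∀ s, 0 < s → 0 < w s)
    (hint : ∀ x, 0 < x → Integrable (fun s => w s * ((x + s) ^ 2)⁻¹) μ)
    (hA : (∀ᵐ s ∂μ, s = s₁) → μ.real univ ≠ A) :
    ∃ a b, {x | 0 < x ∧ ∫ s, w s * ((x + s) ^ 2)⁻¹ ∂μ = A * w s₁ * ((x + s₁) ^ 2)⁻¹} ⊆ {a, b} := by
  by_cases hdeg : ∀ᵐ s ∂μ, s = s₁
  · refine ⟨0, 0, fun x ⟨hx, hxA⟩ => absurd ?_ (hA hdeg)⟩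
    rw [integral_eq_smul_of_ae_eq hdeg, smul_eq_mul] at hxA
    have : 0 < w s₁ * ((x + s₁) ^ 2)⁻¹ := by have := hw s₁ hs₁; positivity
    exact mul_right_cancel₀ this.ne' (by rw [hxA]; ring)
  obtain ⟨a, b, hab⟩ := (strictConvexOn_integral_mul_inv_sq_one_add_sub_mul hs₁ hμ hw hint
    (not_eventually.1 hdeg)).exists_subset_pair_of_eq (A * w s₁)
  refine ⟨a⁻¹ - s₁, b⁻¹ - s₁, fun x ⟨hx, hxA⟩ => ?_⟩
  have hx₁ : 0 < x + s₁ := by linarith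
  obtain h | h : (x + s₁)⁻¹ = a ∨ (x + s₁)⁻¹ = b := by
    refine hab ⟨⟨by positivity, inv_strictAnti₀ hs₁ (by linarith)⟩, ?_⟩
    simp_rw [mul_inv_sq_one_add_sub_mul_inv _ hx₁.ne']
    rw [integral_const_mul, hxA]
    field_simp
  all_goals simp [← h]

end

section

variable {ρ : Measure ℝ} {v : ℝ → ℝ} {s₁ A₁ : ℝ}

theorem hasDerivAt_of_eq_integral_inv_add_sub (hρ : ∀ᵐ s ∂ρ, 0 ≤ s)
    (h1 : Integrable (fun s => (1 + s)⁻¹) ρ) (hs₁ : 0 < s₁)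
    (hv : ∀ x, 0 < x → v x = (∫ s, 1 / (x + s) ∂ρ) - A₁ / (x + s₁)) {x : ℝ} (hx : 0 < x) :
    HasDerivAt v (A₁ * ((x + s₁) ^ 2)⁻¹ - ∫ s, ((x + s) ^ 2)⁻¹ ∂ρ) x := by
  have hA : HasDerivAt (fun y => A₁ * (y + s₁)⁻¹) (-(A₁ * ((x + s₁) ^ 2)⁻¹)) x := by
    simpa using ((hasDerivAt_inv (by linarith : x + s₁ ≠ 0)).comp_add_const x s₁).const_mul A₁
  refine ((hasDerivAt_integral_inv_add hρ h1 hx).sub hA).congr_of_eventuallyEq ?_ |>.congr_deriv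
    (by ring)
  filter_upwards [Ioi_mem_nhds hx] with y hy
  simp [hv y hy, div_eq_mul_inv]

theorem hasDerivAt_mul_of_eq_integral_inv_add_sub (hρ : ∀ᵐ s ∂ρ, 0 ≤ s)
    (h1 : Integrable (fun s => (1 + s)⁻¹) ρ) (hs₁ : 0 < s₁)
    (hv : ∀ x, 0 < x → v x = (∫ s, 1 / (x + s) ∂ρ) - A₁ / (x + s₁)) {x : ℝ} (hx : 0 < x) :
    HasDerivAt (fun y => y * v y)
      ((∫ s, s * ((x + s) ^ 2)⁻¹ ∂ρ) - A₁ * s₁ * ((x + s₁) ^ 2)⁻¹) x := by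
  refine ((hasDerivAt_id x).mul
    (hasDerivAt_of_eq_integral_inv_add_sub hρ h1 hs₁ hv hx)).congr_deriv ?_
  have hsplit : ∫ s, s * ((x + s) ^ 2)⁻¹ ∂ρ =
      (∫ s, (x + s)⁻¹ ∂ρ) - x * ∫ s, ((x + s) ^ 2)⁻¹ ∂ρ := by
    rw [← integral_const_mul, ← integral_sub (integrable_inv_add hρ h1 hx)
      ((integrable_inv_add_sq hρ h1 hx).const_mul x)]
    refine integral_congr_ae (hρ.mono fun s hs => ?_)
    have : 0 < x + s := by linarith
    field_simp
    ring
  have : 0 < x + s₁ := by linarith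
  simp only [id, hv x hx, hsplit, one_div]
  field_simp
  ring

end

theorem zeros_of_derivatives_at_most_two_general
    (s₁ A₁ : ℝ) (hs₁ : 0 < s₁)
    (ρ : Measure ℝ) (hρsupp : ρ (Set.Iic 0) = 0)
    (hρint : Integrable (fun s => 1 / (1 + s)) ρ)
    (v : ℝ → ℝ)
    (hv : ∀ x, 0 < x → v x = (∫ s, 1 / (x + s) ∂ρ) - A₁ / (x + s₁))
    (hnontriv : ¬ ∀ x, 0 < x → v x = 0) :
    (∃ a b : ℝ, {x : ℝ | 0 < x ∧ deriv v x = 0} ⊆ {a, b}) ∧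
      (∃ a b : ℝ, {x : ℝ | 0 < x ∧ deriv (fun y => y * v y) x = 0} ⊆ {a, b}) := by
  have hρ : ∀ᵐ s ∂ρ, 0 < s :=
    (measure_eq_zero_iff_ae_notMem.1 hρsupp).mono fun s hs => not_le.1 hs
  have hρ' : ∀ᵐ s ∂ρ, 0 ≤ s := hρ.mono fun s hs => hs.le
  have h1 : Integrable (fun s => (1 + s)⁻¹) ρ := by simpa only [one_div] using hρint
  have hA : (∀ᵐ s ∂ρ, s = s₁) → ρ.real univ ≠ A₁ := fun hdeg hmass => hnontriv fun x hx => by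
    rw [hv x hx, integral_eq_smul_of_ae_eq hdeg, hmass, smul_eq_mul]
    ring
  constructor
  · obtain ⟨a, b, hab⟩ := exists_subset_pair_setOf_integral_mul_inv_sq_eq (w := fun _ => 1) A₁
      hs₁ hρ (fun _ _ => one_pos) (fun x hx => by simpa using integrable_inv_add_sq hρ' h1 hx) hA
    refine ⟨a, b, fun x ⟨hx, hx0⟩ => hab ⟨hx, ?_⟩⟩
    rw [(hasDerivAt_of_eq_integral_inv_add_sub hρ' h1 hs₁ hv hx).deriv] at hx0
    simp only [one_mul, mul_one]
    linarith
  · obtain ⟨a, b, hab⟩ := exists_subset_pair_setOf_integral_mul_inv_sq_eq (w := id) A₁ hs₁ hρ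
      (fun _ hs => hs) (fun x hx => integrable_mul_inv_add_sq hρ' h1 hx) hA
    refine ⟨a, b, fun x ⟨hx, hx0⟩ => hab ⟨hx, ?_⟩⟩
    rw [(hasDerivAt_mul_of_eq_integral_inv_add_sub hρ' h1 hs₁ hv hx).deriv] at hx0
    simp only [id]
    linarith

theorem zeros_of_derivatives_at_most_two
    (s₁ A₁ : ℝ) (hs₁ : 0 < s₁) (hA₁ : 0 < A₁)
    (ρ : Measure ℝ) (hρsupp : ρ (Set.Iic 0) = 0)
    (hρint : Integrable (fun s => 1 / (1 + s)) ρ)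
    (v : ℝ → ℝ)
    (hv : ∀ x, 0 < x → v x = (∫ s, 1 / (x + s) ∂ρ) - A₁ / (x + s₁))
    (hnontriv : ¬ ∀ x, 0 < x → v x = 0) :
    (∃ a b : ℝ, {x : ℝ | 0 < x ∧ deriv v x = 0} ⊆ {a, b}) ∧
      (∃ a b : ℝ, {x : ℝ | 0 < x ∧ deriv (fun y => y * v y) x = 0} ⊆ {a, b}) :=
  zeros_of_derivatives_at_most_two_general s₁ A₁ hs₁ ρ hρsupp hρint v hv hnontriv
end

section
/- Let r ≥ 1 be an integer, 0 < q < 1 and 0 < t < 1. Define V(x) = −((1−t)/t)·log(x + q^{−1}) + ((r+t)/t)·log(x^{1/r} + q^{1/r}) for x ≥ 0, where x^{1/r} denotes the nonnegative real r-th root. Then V(0) = min_{x ≥ 0} V(x), i.e. V(x) ≥ V(0) for every x ≥ 0. -/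
/-!
Put `s = q^{1/r}` and `c = (x/q)^{1/r}`, so that `x^{1/r} + s = s (1 + c)` and
`x + q⁻¹ = q⁻¹ (1 + q x)`. Then `V x - V 0 = b log (1 + c) - a log (1 + q x)` with
`a = (1-t)/t` and `b = (r+t)/t`. Since `q ≤ 1`, `1 + q x ≤ 1 + x/q = 1 + c^r ≤ (1 + c)^r`,
so `a log (1 + q x) ≤ a r log (1 + c)`, and `a r ≤ b` finishes the proof.
-/

open Real

lemma Real.log_one_add_pow_le {c : ℝ} (hc : 0 ≤ c) {n : ℕ} (hn : n ≠ 0) :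
    log (1 + c ^ n) ≤ n * log (1 + c) := by
  rw [← log_pow]
  exact log_le_log (by positivity) (by simpa using pow_add_pow_le zero_le_one hc hn)

lemma Real.log_add_eq_log_add_log_one_add_div {x p : ℝ} (hp : 0 < p) (hxp : 0 < x + p) :
    log (x + p) = log p + log (1 + x / p) := by
  have h : 1 + x / p = (x + p) / p := by field_simp; ring
  rw [h, log_div hxp.ne' hp.ne']
  ring

lemma Real.log_one_add_mul_le_mul_log_one_add_rpow_inv {x q : ℝ} (hx : 0 ≤ x) (hq0 : 0 < q)
    (hq1 : q ≤ 1) {n : ℕ} (hn : n ≠ 0) :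
    log (1 + q * x) ≤ n * log (1 + (x / q) ^ (n : ℝ)⁻¹) := by
  have hqx : q * x ≤ x / q := by
    rw [le_div_iff₀ hq0]
    nlinarith [mul_le_mul_of_nonneg_right (mul_le_one₀ hq1 hq0.le hq1) hx]
  calc log (1 + q * x) ≤ log (1 + x / q) := log_le_log (by positivity) (by linarith)
    _ = log (1 + ((x / q) ^ (n : ℝ)⁻¹) ^ n) := by
      rw [rpow_inv_natCast_pow (div_nonneg hx hq0.le) hn]
    _ ≤ n * log (1 + (x / q) ^ (n : ℝ)⁻¹) := log_one_add_pow_le (by positivity) hn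

theorem V_attains_min_at_zero
    (r : ℕ) (hr : 1 ≤ r) (q t : ℝ) (hq0 : 0 < q) (hq1 : q < 1)
    (ht0 : 0 < t) (ht1 : t < 1)
    (V : ℝ → ℝ)
    (hV : ∀ x : ℝ, 0 ≤ x →
      V x = -((1 - t) / t) * Real.log (x + q⁻¹)
        + (((r : ℝ) + t) / t) * Real.log (x ^ ((r : ℝ)⁻¹) + q ^ ((r : ℝ)⁻¹))) :
    ∀ x : ℝ, 0 ≤ x → V 0 ≤ V x := by
  intro x hx
  have hr0 : r ≠ 0 := by omega
  set a := (1 - t) / t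
  set b := ((r : ℝ) + t) / t
  set c := (x / q) ^ (r : ℝ)⁻¹
  have hV0 : V 0 = -a * log q⁻¹ + b * log (q ^ (r : ℝ)⁻¹) := by
    rw [hV 0 le_rfl, zero_rpow (by positivity), zero_add, zero_add]
  have hVx : V x =
      -a * (log q⁻¹ + log (1 + q * x)) + b * (log (q ^ (r : ℝ)⁻¹) + log (1 + c)) := by
    have hs : 0 < q ^ (r : ℝ)⁻¹ := by positivity
    rw [hV x hx, log_add_eq_log_add_log_one_add_div (inv_pos.2 hq0) (by positivity),
      log_add_eq_log_add_log_one_add_div hs (by positivity),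
      div_inv_eq_mul, mul_comm x q, ← div_rpow hx hq0.le]
  have ha : 0 ≤ a := div_nonneg (by linarith) ht0.le
  have hab : a * r ≤ b := by
    rw [div_mul_eq_mul_div]
    refine div_le_div_of_nonneg_right ?_ ht0.le
    nlinarith [(Nat.cast_nonneg r : (0 : ℝ) ≤ r)]
  have hc : 0 ≤ log (1 + c) := log_nonneg (le_add_of_nonneg_right (by positivity))
  suffices a * log (1 + q * x) ≤ b * log (1 + c) by rw [hV0, hVx]; linarith
  calc a * log (1 + q * x) ≤ a * (r * log (1 + c)) :=
        mul_le_mul_of_nonneg_left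
          (log_one_add_mul_le_mul_log_one_add_rpow_inv hx hq0 hq1.le hr0) ha
    _ = (a * r) * log (1 + c) := by ring
    _ ≤ b * log (1 + c) := mul_le_mul_of_nonneg_right hab hc
end

section
/- Let r ≥ 1 be an integer, 0 < q < 1 and 0 < t < 1. Define V(x) = −((1−t)/t)·log(x + q^{−1}) + ((r+t)/t)·log(x^{1/r} + q^{1/r}) for x ≥ 0, where x^{1/r} denotes the nonnegative real r-th root. Then for every x ≥ 0, V(x) − V(0) ≥ (1 + 1/r)·log(q·x + 1). -/
theorem V_lower_bound
    (r : ℕ) (hr : 1 ≤ r) (q t : ℝ) (hq0 : 0 < q) (hq1 : q < 1)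
    (ht0 : 0 < t) (ht1 : t < 1)
    (V : ℝ → ℝ)
    (hV : ∀ x : ℝ, 0 ≤ x →
      V x = -((1 - t) / t) * Real.log (x + q⁻¹)
        + (((r : ℝ) + t) / t) * Real.log (x ^ ((r : ℝ)⁻¹) + q ^ ((r : ℝ)⁻¹))) :
    ∀ x : ℝ, 0 ≤ x →
      (1 + 1 / (r : ℝ)) * Real.log (q * x + 1) ≤ V x - V 0 := by
  intro x hx
  have hrr : (1 : ℝ) ≤ (r : ℝ) := by exact_mod_cast hr
  have hrpos : (0 : ℝ) < (r : ℝ) := lt_of_lt_of_le one_pos hrr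
  set z : ℝ := (r : ℝ)⁻¹ with hzdef
  have hzpos : 0 < z := inv_pos.mpr hrpos
  have hz1 : z ≤ 1 := inv_le_one_of_one_le₀ hrr
  have hq1x : (0 : ℝ) < q * x + 1 := by positivity
  have hL0 : Real.log (x + q⁻¹) = Real.log (q * x + 1) + Real.log q⁻¹ := by
    have h : x + q⁻¹ = (q * x + 1) * q⁻¹ := by field_simp
    rw [h, Real.log_mul (ne_of_gt hq1x) (by positivity)]
  have hxq : (0 : ℝ) ≤ x / q := by positivity
  have hM0 : Real.log (x ^ z + q ^ z)
      = z * Real.log q + Real.log ((x / q) ^ z + 1) := by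
    have h1 : x ^ z + q ^ z = q ^ z * ((x / q) ^ z + 1) := by
      rw [Real.div_rpow hx hq0.le]
      have hqz : (0 : ℝ) < q ^ z := Real.rpow_pos_of_pos hq0 z
      field_simp
    rw [h1, Real.log_mul (by positivity) (by positivity), Real.log_rpow hq0]
  have hV0 : V 0 = -((1 - t) / t) * Real.log q⁻¹
      + (((r : ℝ) + t) / t) * (z * Real.log q) := by
    rw [hV 0 le_rfl, Real.zero_rpow (ne_of_gt hzpos)]
    simp only [zero_add]
    rw [Real.log_rpow hq0]
  have key : V x - V 0 = -((1 - t) / t) * Real.log (q * x + 1)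
      + (((r : ℝ) + t) / t) * Real.log ((x / q) ^ z + 1) := by
    rw [hV x hx, hV0, hL0, hM0]; ring
  -- subadditivity of rpow
  have hqx : (0 : ℝ) ≤ q * x := by positivity
  have hsub1 : (q * x + 1) ^ z ≤ (q * x) ^ z + 1 := by
    have h := NNReal.rpow_add_le_add_rpow ((q * x).toNNReal) 1 hzpos.le hz1
    have h' := NNReal.coe_le_coe.mpr h
    simpa [NNReal.coe_rpow, Real.coe_toNNReal _ hqx] using h'
  have hle : q * x ≤ x / q := by
    have h1 : q * x ≤ x := by nlinarith
    have h2 : x ≤ x / q := by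
      rw [le_div_iff₀ hq0]; nlinarith
    linarith
  have hsub2 : (q * x) ^ z ≤ (x / q) ^ z :=
    Real.rpow_le_rpow hqx hle hzpos.le
  have hsub : (q * x + 1) ^ z ≤ (x / q) ^ z + 1 := by linarith
  have hMge : z * Real.log (q * x + 1) ≤ Real.log ((x / q) ^ z + 1) := by
    calc z * Real.log (q * x + 1) = Real.log ((q * x + 1) ^ z) :=
          (Real.log_rpow hq1x _).symm
      _ ≤ Real.log ((x / q) ^ z + 1) :=
          Real.log_le_log (Real.rpow_pos_of_pos hq1x z) hsub
  rw [key]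
  have hd : (0 : ℝ) < ((r : ℝ) + t) / t := by positivity
  have h2 : (((r : ℝ) + t) / t) * (z * Real.log (q * x + 1))
      ≤ (((r : ℝ) + t) / t) * Real.log ((x / q) ^ z + 1) :=
    mul_le_mul_of_nonneg_left hMge hd.le
  have hco : (1 + 1 / (r : ℝ)) = -((1 - t) / t) + (((r : ℝ) + t) / t) * z := by
    rw [hzdef]; field_simp; ring
  rw [hco]
  nlinarith [h2]
end
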